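/- arXiv:1903.02028 — 2 statements merged into one kernel-verified Lean document; each statement's English description precedes it below -/
import Mathlib

section
/- If a finite partial order P has property (itov), then the union of all maximum chains of P is a trunk of P; in particular P has a relatively maximum full trunk. -/
variable {P : Type*} [PartialOrder P]

/-- Two elements of a partial order are incomparable if neither is `≤` the other. -/
def Incomp (x y : P) : Prop := x ≠ y ∧ ¬x ≤ y ∧ ¬y ≤ x

/-- Four elements realize the pattern of `O_obs1` ('2+2'). -/
def Obs1At (a b c d : P) : Prop :=
  a < b ∧ c < d ∧ Incomp a c ∧ Incomp a d ∧ Incomp b c ∧ Incomp b d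

/-- Four elements realize the pattern of `O_obs2` ('N'). -/
def Obs2At (a b c d : P) : Prop :=
  a < b ∧ c < d ∧ c < b ∧ Incomp a c ∧ Incomp a d ∧ Incomp b d

/-- Property (itov): no induced suborder isomorphic to `O_obs1` nor to `O_obs2`. -/
def Itov (P : Type*) [PartialOrder P] : Prop :=
  (¬∃ a b c d : P, Obs1At a b c d) ∧ (¬∃ a b c d : P, Obs2At a b c d)

/-- A subset `T` of a partial order is a trunk if the incomparability relation is
transitive on `T`. -/
def IsTrunkOn (T : Set P) : Prop :=
  ∀ x y z : P, x ∈ T → y ∈ T → z ∈ T → x ≠ z → Incomp x y → Incomp y z → Incomp x z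

/-- A maximum chain of a finite partial order: a chain of maximum cardinality. -/
def IsMaximumChain (C : Set P) : Prop :=
  IsChain (· ≤ ·) C ∧ ∀ D : Set P, IsChain (· ≤ ·) D → D.ncard ≤ C.ncard

/-- The union of all maximum chains of `P`. -/
def maxChainUnion (P : Type*) [PartialOrder P] : Set P :=
  {x : P | ∃ C : Set P, IsMaximumChain C ∧ x ∈ C}

/-- A full trunk: a trunk containing at least one maximum chain. -/
def IsFullTrunk (T : Set P) : Prop :=
  IsTrunkOn T ∧ ∃ C : Set P, IsMaximumChain C ∧ C ⊆ T

/-- A maximal full trunk: a full trunk not properly contained in another full trunk. -/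
def IsMaxFullTrunk (T : Set P) : Prop :=
  IsFullTrunk T ∧ ∀ T' : Set P, IsFullTrunk T' → T ⊆ T' → T = T'

section Aux
set_option linter.unusedSectionVars false

open Set

variable [Fintype P]

private lemma incomp_symm {x y : P} (h : Incomp x y) : Incomp y x :=
  ⟨h.1.symm, h.2.2, h.2.1⟩

/-- rank of `x` relative to a chain `C`. -/
private noncomputable def rk (C : Set P) (x : P) : ℕ := {c ∈ C | c ≤ x}.ncard

private lemma maxchain_card_eq {C C' : Set P} (hC : IsMaximumChain C)
    (hC' : IsMaximumChain C') : C.ncard = C'.ncard :=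
  le_antisymm (hC'.2 C hC.1) (hC.2 C' hC'.1)

private lemma rk_le {C : Set P} (x : P) : rk C x ≤ C.ncard :=
  Set.ncard_le_ncard (fun c hc => hc.1) C.toFinite

private lemma rk_pos {C : Set P} {x : P} (hx : x ∈ C) : 1 ≤ rk C x :=
  (Set.ncard_pos (Set.toFinite _)).2 ⟨x, hx, le_refl x⟩

/-- rank is well defined: independent of the maximum chain containing `x`. -/
private lemma rk_le_rk {C C' : Set P} (hC : IsMaximumChain C) (hC' : IsMaximumChain C')
    {x : P} (hx : x ∈ C) (hx' : x ∈ C') : rk C' x ≤ rk C x := by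
  set E : Set P := {c ∈ C' | c ≤ x} ∪ {c ∈ C | ¬ c ≤ x} with hE
  have hEchain : IsChain (· ≤ ·) E := by
    rintro a (⟨haC, hax⟩ | ⟨haC, hax⟩) b (⟨hbC, hbx⟩ | ⟨hbC, hbx⟩) hne
    · exact hC'.1 haC hbC hne
    · left
      rcases eq_or_ne b x with rfl | hbne
      · exact absurd le_rfl hbx
      · rcases hC.1 hbC hx hbne with hb | hb
        · exact absurd hb hbx
        · exact hax.trans hb
    · right
      rcases eq_or_ne a x with rfl | hane
      · exact absurd le_rfl hax
      · rcases hC.1 haC hx hane with ha | ha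
        · exact absurd ha hax
        · exact hbx.trans ha
    · exact hC.1 haC hbC hne
  have hdisj : Disjoint {c ∈ C' | c ≤ x} {c ∈ C | ¬ c ≤ x} := by
    rw [Set.disjoint_left]
    rintro c ⟨_, hcx⟩ ⟨_, hncx⟩; exact hncx hcx
  have hcard : E.ncard = rk C' x + ({c ∈ C | ¬ c ≤ x}).ncard :=
    Set.ncard_union_eq hdisj (Set.toFinite _) (Set.toFinite _)
  have hcompl : ({c ∈ C | ¬ c ≤ x}).ncard = C.ncard - rk C x := by
    have : {c ∈ C | ¬ c ≤ x} = C \ {c ∈ C | c ≤ x} := by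
      ext c; simp only [Set.mem_setOf_eq, Set.mem_diff]; tauto
    rw [this, Set.ncard_diff (fun c hc => hc.1) (Set.toFinite _)]; rfl
  have hle : E.ncard ≤ C.ncard := by
    calc E.ncard ≤ C'.ncard := hC'.2 E hEchain
    _ = C.ncard := (maxchain_card_eq hC hC').symm
  have h1 := rk_le (C := C) x
  omega

private lemma rk_eq_rk {C C' : Set P} (hC : IsMaximumChain C) (hC' : IsMaximumChain C')
    {x : P} (hx : x ∈ C) (hx' : x ∈ C') : rk C x = rk C' x :=
  le_antisymm (rk_le_rk hC' hC hx' hx) (rk_le_rk hC hC' hx hx')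

/-- rank is strictly order-reflecting across maximum chains. -/
private lemma rk_lt_rk {C C' : Set P} (hC : IsMaximumChain C) (hC' : IsMaximumChain C')
    {x z : P} (hx : x ∈ C) (hz : z ∈ C') (hxz : x < z) : rk C x < rk C' z := by
  set E : Set P := {c ∈ C | c ≤ x} ∪ {c ∈ C' | z ≤ c} with hE
  have hEchain : IsChain (· ≤ ·) E := by
    rintro a (⟨haC, hax⟩ | ⟨haC, hax⟩) b (⟨hbC, hbx⟩ | ⟨hbC, hbx⟩) hne
    · exact hC.1 haC hbC hne
    · left; exact hax.trans (hxz.le.trans hbx)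
    · right; exact hbx.trans (hxz.le.trans hax)
    · exact hC'.1 haC hbC hne
  have hdisj : Disjoint {c ∈ C | c ≤ x} {c ∈ C' | z ≤ c} := by
    rw [Set.disjoint_left]
    rintro c ⟨_, hcx⟩ ⟨_, hzc⟩
    exact absurd (hzc.trans hcx) (not_le_of_gt hxz)
  have hcard : E.ncard = rk C x + ({c ∈ C' | z ≤ c}).ncard :=
    Set.ncard_union_eq hdisj (Set.toFinite _) (Set.toFinite _)
  have hup : ({c ∈ C' | z ≤ c}).ncard = C'.ncard - rk C' z + 1 := by
    have heq : {c ∈ C' | z ≤ c} = insert z {c ∈ C' | ¬ c ≤ z} := by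
      ext c
      simp only [Set.mem_setOf_eq, Set.mem_insert_iff]
      constructor
      · rintro ⟨hcC, hzc⟩
        rcases eq_or_ne c z with rfl | hne
        · exact Or.inl rfl
        · exact Or.inr ⟨hcC, fun hcz => hne (le_antisymm hcz hzc)⟩
      · rintro (rfl | ⟨hcC, hcz⟩)
        · exact ⟨hz, le_rfl⟩
        · rcases eq_or_ne c z with rfl | hne
          · exact ⟨hcC, le_rfl⟩
          · rcases hC'.1 hcC hz hne with hle | hle
            · exact absurd hle hcz
            · exact ⟨hcC, hle⟩
    have hznot : z ∉ {c ∈ C' | ¬ c ≤ z} := fun hmem => hmem.2 le_rfl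
    have hcompl : ({c ∈ C' | ¬ c ≤ z}).ncard = C'.ncard - rk C' z := by
      have : {c ∈ C' | ¬ c ≤ z} = C' \ {c ∈ C' | c ≤ z} := by
        ext c; simp only [Set.mem_setOf_eq, Set.mem_diff]; tauto
      rw [this, Set.ncard_diff (fun c hc => hc.1) (Set.toFinite _)]; rfl
    rw [heq, Set.ncard_insert_of_notMem hznot (Set.toFinite _), hcompl]
  have hle : E.ncard ≤ C'.ncard := by
    calc E.ncard ≤ C.ncard := hC.2 E hEchain
    _ = C'.ncard := maxchain_card_eq hC hC'
  have h1 := rk_le (C := C') z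
  have h2 := rk_pos hz
  omega

/-- elements of equal rank on maximum chains are equal or incomparable. -/
private lemma rk_eq_incomp {C C' : Set P} (hC : IsMaximumChain C) (hC' : IsMaximumChain C')
    {x z : P} (hx : x ∈ C) (hz : z ∈ C') (hrk : rk C x = rk C' z) (hne : x ≠ z) :
    Incomp x z := by
  refine ⟨hne, fun hle => ?_, fun hle => ?_⟩
  · exact absurd hrk (Nat.ne_of_lt (rk_lt_rk hC hC' hx hz (lt_of_le_of_ne hle hne)))
  · exact absurd hrk.symm (Nat.ne_of_lt (rk_lt_rk hC' hC hz hx (lt_of_le_of_ne hle hne.symm)))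

/-- every maximum chain contains an element of each rank `1..n`. -/
private lemma rk_surj {C : Set P} (hC : IsMaximumChain C) {r : ℕ} (h1 : 1 ≤ r)
    (h2 : r ≤ C.ncard) : ∃ u ∈ C, rk C u = r := by
  have hinj : Set.InjOn (rk C) C := by
    intro a ha b hb hab
    by_contra hne
    have hmono : ∀ p q : P, p ∈ C → q ∈ C → p < q → rk C p < rk C q := by
      intro p q hp hq hpq
      have hsub : {c ∈ C | c ≤ p} ⊆ {c ∈ C | c ≤ q} :=
        fun c hc => ⟨hc.1, hc.2.trans hpq.le⟩
      have hssub : {c ∈ C | c ≤ p} ⊂ {c ∈ C | c ≤ q} := by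
        refine ⟨hsub, fun hsup => ?_⟩
        have := hsup ⟨hq, le_rfl⟩
        exact absurd this.2 (not_le_of_gt hpq)
      exact Set.ncard_lt_ncard hssub (Set.toFinite _)
    rcases hC.1 ha hb hne with hle | hle
    · exact absurd hab (Nat.ne_of_lt (hmono a b ha hb (lt_of_le_of_ne hle hne)))
    · exact absurd hab.symm (Nat.ne_of_lt (hmono b a hb ha (lt_of_le_of_ne hle (Ne.symm hne))))
  have himg : rk C '' C ⊆ Set.Icc 1 C.ncard := by
    rintro - ⟨u, hu, rfl⟩
    exact ⟨rk_pos hu, rk_le u⟩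
  have hicc : (Set.Icc 1 C.ncard).ncard = C.ncard := by
    rw [← Finset.coe_Icc, Set.ncard_coe_finset, Nat.card_Icc]; omega
  have hcard : (rk C '' C).ncard = C.ncard := Set.ncard_image_of_injOn hinj
  have heq : rk C '' C = Set.Icc 1 C.ncard :=
    Set.eq_of_subset_of_ncard_le himg (by omega) (Set.finite_Icc _ _)
  have : r ∈ rk C '' C := heq ▸ Set.mem_Icc.2 ⟨h1, h2⟩
  rcases this with ⟨u, hu, hru⟩
  exact ⟨u, hu, hru⟩

/-- key lemma: the union of maximum chains is a trunk, strict-comparability case. -/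
private lemma key (h : Itov P) {x y z : P}
    (hx : x ∈ maxChainUnion P) (hy : y ∈ maxChainUnion P) (hz : z ∈ maxChainUnion P)
    (hxy : Incomp x y) (hyz : Incomp y z) (hxz : x < z) : False := by
  obtain ⟨Cx, hCx, hxCx⟩ := hx
  obtain ⟨Cy, hCy, hyCy⟩ := hy
  obtain ⟨Cz, hCz, hzCz⟩ := hz
  set i := rk Cx x with hi
  set k := rk Cz z with hk
  have hik : i < k := rk_lt_rk hCx hCz hxCx hzCz hxz
  -- element of Cy at rank i
  have hcard : Cy.ncard = Cz.ncard := maxchain_card_eq hCy hCz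
  obtain ⟨u, huCy, hru⟩ := rk_surj hCy (r := i) (rk_pos hxCx)
    (by have := rk_le (C := Cz) z; omega)
  obtain ⟨w, hwCy, hrw⟩ := rk_surj hCy (r := k) (by omega)
    (by have := rk_le (C := Cz) z; omega)
  -- u ≠ x since x ∉ Cy (x incomparable with y)
  have hxny : x ∉ Cy := by
    intro hmem
    rcases hCy.1 hmem hyCy hxy.1 with hle | hle
    · exact hxy.2.1 hle
    · exact hxy.2.2 hle
  have hzny : z ∉ Cy := by
    intro hmem
    rcases hCy.1 hmem hyCy (fun he => hyz.1 he.symm) with hle | hle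
    · exact hyz.2.2 hle
    · exact hyz.2.1 hle
  have hune : u ≠ x := fun he => hxny (he ▸ huCy)
  have hwne : w ≠ z := fun he => hzny (he ▸ hwCy)
  have hux : Incomp u x := rk_eq_incomp hCy hCx huCy hxCx (by rw [hru]) hune
  have hwz : Incomp w z := rk_eq_incomp hCy hCz hwCy hzCz (by rw [hrw]) hwne
  have huw : u < w := by
    have hne : u ≠ w := fun he => by rw [he, hrw] at hru; omega
    rcases hCy.1 huCy hwCy hne with hle | hle
    · exact lt_of_le_of_ne hle hne
    · exfalso
      have := rk_lt_rk hCy hCy hwCy huCy (lt_of_le_of_ne hle (Ne.symm hne))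
      rw [hru, hrw] at this; omega
  -- not z ≤ u, not w ≤ x
  have hnzu : ¬ z ≤ u := by
    intro hle
    rcases eq_or_ne z u with he | hne
    · exact hzny (he ▸ huCy)
    · have := rk_lt_rk hCz hCy hzCz huCy (lt_of_le_of_ne hle hne)
      rw [hru] at this; omega
  have hnwx : ¬ w ≤ x := by
    intro hle
    rcases eq_or_ne w x with he | hne
    · exact hxny (he ▸ hwCy)
    · have := rk_lt_rk hCy hCx hwCy hxCx (lt_of_le_of_ne hle hne)
      rw [hrw] at this; omega
  by_cases huz : u ≤ z
  · -- case B : u < z, use Obs2At x z u y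
    have huzlt : u < z := lt_of_le_of_ne huz (fun he => hnzu (he ▸ le_rfl))
    have huy : u < y := by
      have hne : u ≠ y := by
        rintro rfl; exact hyz.2.1 huzlt.le
      rcases hCy.1 huCy hyCy hne with hle | hle
      · exact lt_of_le_of_ne hle hne
      · exact absurd (hle.trans huzlt.le) hyz.2.1
    exact h.2 ⟨x, z, u, y, hxz, huy, huzlt, incomp_symm hux, hxy, incomp_symm hyz⟩
  · by_cases hxw : x ≤ w
    · -- case C : x < w, use Obs2At y w x z
      have hxwlt : x < w := lt_of_le_of_ne hxw (fun he => hnwx (he ▸ le_rfl))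
      have hyw : y < w := by
        have hne : y ≠ w := by
          rintro rfl; exact hxy.2.1 hxwlt.le
        rcases hCy.1 hyCy hwCy hne with hle | hle
        · exact lt_of_le_of_ne hle hne
        · exact absurd (hxwlt.le.trans hle) hxy.2.1
      exact h.2 ⟨y, w, x, z, hyw, hxz, hxwlt, incomp_symm hxy, hyz, hwz⟩
    · -- case A : 2+2 pattern x z u w
      have huz' : Incomp u z := ⟨fun he => hnzu (he ▸ le_rfl), huz, hnzu⟩
      have hxw' : Incomp x w := ⟨fun he => hnwx (he ▸ le_rfl), hxw, hnwx⟩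
      exact h.1 ⟨x, z, u, w, hxz, huw, incomp_symm hux, hxw',
        incomp_symm huz', incomp_symm hwz⟩

/-- a maximum chain exists. -/
private lemma exists_maxchain : ∃ C : Set P, IsMaximumChain C := by
  classical
  set pred : ℕ → Prop := fun n => ∃ C : Set P, IsChain (· ≤ ·) C ∧ C.ncard = n with hpred
  have h0 : pred 0 := ⟨∅, by simp [IsChain], by simp⟩
  have hbdd : ∀ D : Set P, IsChain (· ≤ ·) D → D.ncard ≤ Fintype.card P := by
    intro D _
    calc D.ncard ≤ (Set.univ : Set P).ncard :=
          Set.ncard_le_ncard (Set.subset_univ D) Set.finite_univ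
    _ = Fintype.card P := by rw [Set.ncard_univ, Nat.card_eq_fintype_card]
  set n := Nat.findGreatest pred (Fintype.card P) with hn
  have hspec : pred n := Nat.findGreatest_spec (Nat.zero_le _) h0
  obtain ⟨C, hCchain, hCcard⟩ := hspec
  refine ⟨C, hCchain, fun D hD => ?_⟩
  rw [hCcard]
  exact Nat.le_findGreatest (hbdd D hD) ⟨D, hD, rfl⟩

/-- every full trunk is contained in the union of maximum chains. -/
private lemma fullTrunk_subset {T : Set P} (hT : IsFullTrunk T) :
    T ⊆ maxChainUnion P := by
  obtain ⟨htrunk, C, hC, hCT⟩ := hT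
  intro x hxT
  by_cases hxC : x ∈ C
  · exact ⟨C, hC, hxC⟩
  set B := {c ∈ C | Incomp c x} with hB
  have hBsub : B.Subsingleton := by
    intro c1 hc1 c2 hc2
    by_contra hne
    have : Incomp c1 c2 := htrunk c1 x c2 (hCT hc1.1) hxT (hCT hc2.1) hne hc1.2
      (incomp_symm hc2.2)
    rcases hC.1 hc1.1 hc2.1 hne with hle | hle
    · exact this.2.1 hle
    · exact this.2.2 hle
  have hcomp : ∀ c ∈ C, c ∉ B → c ≤ x ∨ x ≤ c := by
    intro c hc hcB
    by_contra hcon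
    push_neg at hcon
    exact hcB ⟨hc, fun he => hxC (he ▸ hc), hcon.1, hcon.2⟩
  rcases Set.eq_empty_or_nonempty B with hBe | ⟨c0, hc0⟩
  · -- insert x C is a bigger chain, contradiction
    exfalso
    have hchain : IsChain (· ≤ ·) (insert x C) := by
      rintro a (rfl | haC) b (rfl | hbC) hne
      · exact absurd rfl hne
      · rcases hcomp b hbC (by rw [hBe]; exact Set.notMem_empty b) with h' | h'
        · exact Or.inr h'
        · exact Or.inl h'
      · rcases hcomp a haC (by rw [hBe]; exact Set.notMem_empty a) with h' | h'
        · exact Or.inl h'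
        · exact Or.inr h'
      · exact hC.1 haC hbC hne
    have := hC.2 _ hchain
    rw [Set.ncard_insert_of_notMem hxC (Set.toFinite _)] at this
    omega
  · -- swap c0 for x
    have hBc0 : B = {c0} :=
      Set.eq_singleton_iff_unique_mem.2 ⟨hc0, fun c hc => hBsub hc hc0⟩
    set C' := insert x (C \ {c0}) with hC'
    have hchain : IsChain (· ≤ ·) C' := by
      have hcmp : ∀ c ∈ C \ ({c0} : Set P), c ≤ x ∨ x ≤ c := by
        rintro c ⟨hcC, hcc0⟩
        refine hcomp c hcC (fun hcB => hcc0 ?_)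
        rw [hBc0] at hcB; exact hcB
      rintro a (rfl | haC) b (rfl | hbC) hne
      · exact absurd rfl hne
      · rcases hcmp b hbC with h' | h'
        · exact Or.inr h'
        · exact Or.inl h'
      · rcases hcmp a haC with h' | h'
        · exact Or.inl h'
        · exact Or.inr h'
      · exact hC.1 haC.1 hbC.1 hne
    have hxnot : x ∉ C \ ({c0} : Set P) := fun hmem => hxC hmem.1
    have hcard : C'.ncard = C.ncard := by
      rw [hC', Set.ncard_insert_of_notMem hxnot (Set.toFinite _),
        Set.ncard_diff_singleton_of_mem hc0.1]
      have : 1 ≤ C.ncard := (Set.ncard_pos (Set.toFinite _)).2 ⟨c0, hc0.1⟩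
      omega
    have hmax : IsMaximumChain C' := ⟨hchain, fun D hD => hcard ▸ hC.2 D hD⟩
    exact ⟨C', hmax, Or.inl rfl⟩

end Aux

/-- If a finite partial order has property (itov), then the union of all its maximum
chains is a trunk; in particular it has a relatively maximum full trunk. -/
theorem itov_has_relatively_maximum_full_trunk
    (P : Type*) [PartialOrder P] [Fintype P] (h : Itov P) :
    IsTrunkOn (maxChainUnion P) ∧
    ∃ T : Set P, IsMaxFullTrunk T ∧ ∀ T' : Set P, IsMaxFullTrunk T' → T' = T := by
  have htrunk : IsTrunkOn (maxChainUnion P) := by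
    intro x y z hx hy hz hne hxy hyz
    refine ⟨hne, fun hle => ?_, fun hle => ?_⟩
    · exact key h hx hy hz hxy hyz (lt_of_le_of_ne hle hne)
    · exact key h hz (hy) hx (incomp_symm hyz) (incomp_symm hxy) (lt_of_le_of_ne hle hne.symm)
  have hfull : IsFullTrunk (maxChainUnion P) := by
    obtain ⟨C, hC⟩ := exists_maxchain (P := P)
    exact ⟨htrunk, C, hC, fun c hc => ⟨C, hC, hc⟩⟩
  refine ⟨htrunk, maxChainUnion P, ⟨hfull, fun T' hT' hsub => le_antisymm hsub (fullTrunk_subset hT')⟩,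
    fun T' hT' => hT'.2 (maxChainUnion P) hfull (fullTrunk_subset hT'.1)⟩
end

section
/- If a finite partial order has property (itov), then it is up-regular: for all x, y, z with level(x) < level(y) = level(z), x stands in the same order relation (<, >, or incomparable) to y as to z. -/
variable {P : Type*} [PartialOrder P]

/-- The level of an element `x` of a finite partial order: one less than the maximum
cardinality of a chain whose greatest element is `x`. -/
noncomputable def level [Fintype P] (x : P) : ℕ :=
  sSup {n : ℕ | ∃ C : Finset P,
    IsChain (· ≤ ·) (C : Set P) ∧ x ∈ C ∧ (∀ y ∈ C, y ≤ x) ∧ C.card = n} - 1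

section
variable [Fintype P]

lemma one_mem_S (x : P) : (1 : ℕ) ∈ {n : ℕ | ∃ C : Finset P,
    IsChain (· ≤ ·) (C : Set P) ∧ x ∈ C ∧ (∀ y ∈ C, y ≤ x) ∧ C.card = n} := by
  refine ⟨{x}, ?_, by simp, by simp, by simp⟩
  simp only [Finset.coe_singleton]
  exact Set.subsingleton_singleton.isChain

lemma bdd_S (x : P) : BddAbove {n : ℕ | ∃ C : Finset P,
    IsChain (· ≤ ·) (C : Set P) ∧ x ∈ C ∧ (∀ y ∈ C, y ≤ x) ∧ C.card = n} :=
  ⟨Fintype.card P, fun n ⟨C, _, _, _, hc⟩ => hc ▸ Finset.card_le_univ C⟩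

lemma level_spec (x : P) : ∃ C : Finset P, IsChain (· ≤ ·) (C : Set P) ∧ x ∈ C ∧
    (∀ y ∈ C, y ≤ x) ∧ C.card = level x + 1 := by
  have hmem := Nat.sSup_mem ⟨1, one_mem_S x⟩ (bdd_S x)
  have h1 : 1 ≤ sSup {n : ℕ | ∃ C : Finset P,
      IsChain (· ≤ ·) (C : Set P) ∧ x ∈ C ∧ (∀ y ∈ C, y ≤ x) ∧ C.card = n} :=
    le_csSup (bdd_S x) (one_mem_S x)
  obtain ⟨C, hC, hxC, hmax, hcard⟩ := hmem
  exact ⟨C, hC, hxC, hmax, by rw [hcard]; unfold level; omega⟩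

lemma level_ge (x : P) {n : ℕ} (hn : n ∈ {n : ℕ | ∃ C : Finset P,
    IsChain (· ≤ ·) (C : Set P) ∧ x ∈ C ∧ (∀ y ∈ C, y ≤ x) ∧ C.card = n}) :
    n ≤ level x + 1 := by
  have := le_csSup (bdd_S x) hn
  have h1 := le_csSup (bdd_S x) (one_mem_S x)
  unfold level; omega

lemma level_lt {x y : P} (hxy : x < y) : level x < level y := by
  classical
  obtain ⟨C, hC, hxC, hmax, hcard⟩ := level_spec x
  have hyC : y ∉ C := fun hy => absurd (hmax y hy) (not_le_of_gt hxy)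
  have hmem : (C.card + 1) ∈ {n : ℕ | ∃ D : Finset P,
      IsChain (· ≤ ·) (D : Set P) ∧ y ∈ D ∧ (∀ w ∈ D, w ≤ y) ∧ D.card = n} := by
    refine ⟨insert y C, ?_, Finset.mem_insert_self _ _, ?_, ?_⟩
    · rw [Finset.coe_insert]
      exact hC.insert fun b hb _ => Or.inr ((hmax b hb).trans hxy.le)
    · intro w hw
      rcases Finset.mem_insert.1 hw with rfl | hw
      · exact le_rfl
      · exact (hmax w hw).trans hxy.le
    · rw [Finset.card_insert_of_notMem hyC]
  have := level_ge y hmem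
  omega

lemma exists_below {z : P} (hz : 1 ≤ level z) :
    ∃ w : P, w < z ∧ level z ≤ level w + 1 := by
  classical
  obtain ⟨C, hC, hzC, hmax, hcard⟩ := level_spec z
  have hne : (C.erase z).Nonempty := by
    rw [← Finset.card_pos, Finset.card_erase_of_mem hzC]; omega
  obtain ⟨w, hwC, hwmax'⟩ := Finset.exists_maximal hne
  have hwmax : ∀ y ∈ C.erase z, ¬ w < y := fun y hy hlt => not_le_of_gt hlt (hwmax' hy hlt.le)
  have hwz : w < z := lt_of_le_of_ne (hmax w (Finset.mem_of_mem_erase hwC))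
    (Finset.ne_of_mem_erase hwC)
  refine ⟨w, hwz, ?_⟩
  have hmem : C.card - 1 ∈ {n : ℕ | ∃ D : Finset P,
      IsChain (· ≤ ·) (D : Set P) ∧ w ∈ D ∧ (∀ y ∈ D, y ≤ w) ∧ D.card = n} := by
    refine ⟨C.erase z, ?_, hwC, ?_, by rw [Finset.card_erase_of_mem hzC]⟩
    · exact hC.mono (by simp [Finset.coe_subset])
    · intro y hy
      rcases eq_or_ne y w with rfl | hne'
      · exact le_rfl
      · rcases hC (Finset.mem_coe.2 (Finset.mem_of_mem_erase hy))
          (Finset.mem_coe.2 (Finset.mem_of_mem_erase hwC)) hne' with h | h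
        · exact h
        · exact absurd (lt_of_le_of_ne h (Ne.symm hne')) (hwmax y hy)
  have := level_ge w hmem
  omega

end

/-- A finite partial order is up-regular if every element stands in the same order
relation to any two elements of equal level above its own level. -/
def UpRegular (P : Type*) [PartialOrder P] [Fintype P] : Prop :=
  ∀ x y z : P, level x < level y → level y = level z →
    ((x < y ↔ x < z) ∧ (y < x ↔ z < x))


lemma itov_key [Fintype P] (h : Itov P) {x y z : P} (hxy : x < y) (hxz : ¬ x < z)
    (hlx : level x < level z) (hlyz : level y = level z) : False := by
  have hixz : Incomp x z := by
    refine ⟨fun he => by rw [he] at hlx; omega, fun hle => hxz (lt_of_le_of_ne hle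
      (fun he => by rw [he] at hlx; omega)), fun hle => ?_⟩
    rcases lt_or_eq_of_le hle with h' | h'
    · have := level_lt h'; omega
    · rw [h'] at hlx; omega
  have hiyz : Incomp y z := by
    refine ⟨fun he => hxz (he ▸ hxy), fun hle => ?_, fun hle => ?_⟩
    · rcases lt_or_eq_of_le hle with h' | h'
      · have := level_lt h'; omega
      · exact hxz (h' ▸ hxy)
    · rcases lt_or_eq_of_le hle with h' | h'
      · have := level_lt h'; omega
      · exact hxz (h' ▸ hxy)
  obtain ⟨w, hwz, hwlev⟩ := exists_below (z := z) (by omega)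
  have hixw : Incomp x w := by
    refine ⟨fun he => hxz (he ▸ hwz), fun hle => hxz (lt_of_le_of_lt hle hwz),
      fun hle => ?_⟩
    rcases lt_or_eq_of_le hle with h' | h'
    · have := level_lt h'; omega
    · exact hxz (h' ▸ hwz)
  have hyw : ¬ y ≤ w := fun hle => hiyz.2.1 (hle.trans hwz.le)
  by_cases hwy : w ≤ y
  · have hwy' : w < y := lt_of_le_of_ne hwy (fun he => hyw (he ▸ le_rfl))
    exact h.2 ⟨x, y, w, z, hxy, hwz, hwy', hixw, hixz, hiyz⟩
  · have hiyw : Incomp y w := ⟨fun he => hyw (he ▸ le_rfl), hyw, hwy⟩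
    exact h.1 ⟨x, y, w, z, hxy, hwz, hixw, hixz, hiyw, hiyz⟩

/-- If a finite partial order has property (itov), then it is up-regular. -/
theorem itov_upRegular (P : Type*) [PartialOrder P] [Fintype P] (h : Itov P) :
    UpRegular P := by
  intro x y z hxy hyz
  refine ⟨⟨fun h1 => ?_, fun h1 => ?_⟩, ⟨fun h1 => ?_, fun h1 => ?_⟩⟩
  · by_contra h2; exact itov_key h h1 h2 (hyz ▸ hxy) hyz
  · by_contra h2; exact itov_key h h1 h2 hxy hyz.symm
  · have := level_lt h1; omega
  · have := level_lt h1; omega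
end
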